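/- arXiv:2103.00842 — 3 statements merged into one kernel-verified Lean document; each statement's English description precedes it below -/
import Mathlib

section
/- Let κ = (κ_1, …, κ_n) ∈ Γ_m^+ with κ_1 ≥ κ_2 ≥ ⋯ ≥ κ_n. Then κ_1 · σ_{m-1}(κ|1) ≥ (m/n) σ_m(κ), where σ_{m-1}(κ|1) is the (m−1)-th elementary symmetric polynomial of (κ_2, …, κ_n). -/
open Finset

noncomputable def esym {n : ℕ} (m : ℕ) (κ : Fin n → ℝ) : ℝ :=
  ∑ s ∈ Finset.powersetCard m (Finset.univ : Finset (Fin n)), ∏ i ∈ s, κ i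

noncomputable def esymRem {n : ℕ} (m : ℕ) (κ : Fin n → ℝ) (i : Fin n) : ℝ :=
  ∑ s ∈ Finset.powersetCard m ((Finset.univ : Finset (Fin n)).erase i), ∏ j ∈ s, κ j

/-!
Write `c_j = σ_j(κ|1)`, so that `σ_m(κ) = κ_1 c_{m-1} + c_m`. If `c_m ≤ 0` the claim is immediate.
Otherwise `κ|1 ∈ Γ_m`, and the Euler-type identities `m c_m = ∑_{i ≥ 2} κ_i σ_{m-1}(κ|1i)` and
`∑_{i ≥ 2} σ_{m-1}(κ|1i) = (n - m) c_{m-1}` together with `κ_i ≤ κ_1` give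
`m c_m ≤ (n - m) κ_1 c_{m-1}`. The signs needed here come from the fact that deleting an entry
maps `Γ_{m+1}` into `Γ_m`, which follows by induction on `m` from Newton's inequality
`σ_j σ_{j+2} ≤ σ_{j+1}^2`. Differentiating `∏ (X + κ_i)` (Rolle keeps all roots real) reduces
Newton's inequality to the case of `j + 2` numbers, where it is Cauchy–Schwarz for the numbers
`σ_{j+1}(κ|i)`.
-/

open Polynomial

namespace Multiset

section Erase

variable {α β : Type*} [DecidableEq α]

theorem map_cons_erase (g : α → Multiset α → β) (a : α) (s : Multiset α) :
    (a ::ₘ s).map (fun x => g x ((a ::ₘ s).erase x)) =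
      g a s ::ₘ s.map (fun x => g x (a ::ₘ s.erase x)) := by
  rw [map_cons, erase_cons_head]
  exact congrArg _ (map_congr rfl fun x hx => by rw [erase_cons_tail_of_mem hx])

end Erase

section CommSemiring

variable {R : Type*} [CommSemiring R]

theorem esymm_zero (s : Multiset R) : s.esymm 0 = 1 := by
  simp [esymm]

theorem esymm_eq_zero_of_card_lt {s : Multiset R} {j : ℕ} (h : card s < j) : s.esymm j = 0 := by
  simp [esymm, powersetCard_eq_empty _ h]

theorem esymm_cons_succ (a : R) (s : Multiset R) (j : ℕ) :
    (a ::ₘ s).esymm (j + 1) = a * s.esymm j + s.esymm (j + 1) := by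
  simp only [esymm, powersetCard_cons, map_add, sum_add, map_map, Function.comp_def, prod_cons,
    sum_map_mul_left, add_comm]

variable [DecidableEq R]

theorem esymm_succ_eq_of_mem {s : Multiset R} {a : R} (ha : a ∈ s) (j : ℕ) :
    s.esymm (j + 1) = a * (s.erase a).esymm j + (s.erase a).esymm (j + 1) := by
  conv_lhs => rw [← cons_erase ha]
  exact esymm_cons_succ ..

theorem sum_map_mul_esymm_erase (s : Multiset R) (j : ℕ) :
    (s.map fun a => a * (s.erase a).esymm j).sum = (j + 1) * s.esymm (j + 1) := by
  induction s using Multiset.induction_on generalizing j with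
  | empty => simp [esymm_eq_zero_of_card_lt (show card (0 : Multiset R) < j + 1 by simp)]
  | cons a u ih =>
    rw [map_cons_erase (fun x t => x * t.esymm j), sum_cons]
    cases j with
    | zero =>
      have ih0 := ih 0
      simp only [esymm_zero] at ih0 ⊢
      rw [ih0, esymm_cons_succ, esymm_zero]
      ring
    | succ j =>
      simp only [esymm_cons_succ, mul_add, mul_left_comm _ a, sum_map_add, sum_map_mul_left, ih]
      push_cast
      ring

end CommSemiring

theorem sum_map_esymm_erase {R : Type*} [CommRing R] [DecidableEq R] (s : Multiset R) (j : ℕ) :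
    (s.map fun a => (s.erase a).esymm j).sum = (card s - j) * s.esymm j := by
  induction s using Multiset.induction_on generalizing j with
  | empty =>
    cases j with
    | zero => simp [esymm_zero]
    | succ j => simp [esymm_eq_zero_of_card_lt (show card (0 : Multiset R) < j + 1 by simp)]
  | cons a u ih =>
    rw [map_cons_erase (fun _ t => t.esymm j), sum_cons]
    cases j with
    | zero =>
      simp only [esymm_zero, map_const', sum_replicate, nsmul_eq_mul, mul_one, card_cons,
        Nat.cast_add, Nat.cast_one, Nat.cast_zero, sub_zero]
      ring
    | succ j =>
      simp only [esymm_cons_succ, sum_map_add, sum_map_mul_left, ih, card_cons]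
      push_cast
      ring

theorem sq_sum_map_le_card_mul_sum_map_sq {ι α : Type*} [CommSemiring α] [LinearOrder α]
    [IsStrictOrderedRing α] [ExistsAddOfLE α] (s : Multiset ι) (f : ι → α) :
    (s.map f).sum ^ 2 ≤ card s * (s.map fun i => f i ^ 2).sum := by
  classical
  have h := sq_sum_le_card_mul_sum_sq (s := (Finset.univ : Finset s)) (f := fun i => f i)
  rwa [Finset.card_univ, card_coe, Finset.sum, Finset.sum, map_univ,
    map_univ s (fun i => f i ^ 2)] at h

theorem esymm_mul_esymm_le_of_card_eq_add_two {t : Multiset ℝ} {c : ℕ} (ht : card t = c + 2) :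
    2 * (c + 2) * (t.esymm c * t.esymm (c + 2)) ≤ (c + 1) * t.esymm (c + 1) ^ 2 := by
  set q := fun x => (t.erase x).esymm (c + 1)
  have hsum : (t.map q).sum = t.esymm (c + 1) := by
    rw [sum_map_esymm_erase, ht]
    push_cast
    ring
  have hsq : ∀ x ∈ t,
      q x ^ 2 = t.esymm (c + 1) * q x - t.esymm (c + 2) * (t.erase x).esymm c := by
    intro x hx
    -- `x * q x = σ_{c+2}(t)`, as `t.erase x` has only `c + 1` elements
    have hcard : card (t.erase x) < c + 2 := by rw [card_erase_of_mem hx, ht]; simp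
    rw [esymm_succ_eq_of_mem hx c, esymm_succ_eq_of_mem hx (c + 1),
      esymm_eq_zero_of_card_lt hcard]
    ring
  have hsumsq : (t.map fun x => q x ^ 2).sum =
      t.esymm (c + 1) ^ 2 - 2 * (t.esymm c * t.esymm (c + 2)) := by
    rw [map_congr rfl hsq, sum_map_sub, sum_map_mul_left, sum_map_mul_left, hsum,
      sum_map_esymm_erase, ht]
    push_cast
    ring
  have hCS := sq_sum_map_le_card_mul_sum_map_sq t q
  rw [hsum, hsumsq, ht] at hCS
  push_cast at hCS
  linarith

end Multiset

namespace Polynomial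

theorem Splits.derivative {p : ℝ[X]} (hp : p.Splits) : (Polynomial.derivative p).Splits := by
  rw [splits_iff_card_roots] at hp ⊢
  have h1 := card_roots_le_derivative p
  have h2 := card_roots' (Polynomial.derivative p)
  have h3 := natDegree_derivative_le p
  omega

theorem Splits.iterate_derivative {p : ℝ[X]} (hp : p.Splits) (k : ℕ) :
    (Polynomial.derivative^[k] p).Splits := by
  induction k with
  | zero => exact hp
  | succ k ih =>
    rw [Function.iterate_succ_apply']
    exact ih.derivative

theorem Splits.two_mul_coeff_zero_mul_coeff_two_le {p : ℝ[X]} (hp : p.Splits) {d : ℕ}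
    (hd : p.natDegree = d + 2) :
    2 * (d + 2) * (p.coeff 0 * p.coeff 2) ≤ (d + 1) * p.coeff 1 ^ 2 := by
  have hroots : Multiset.card p.roots = d + 2 := hd ▸ hp.natDegree_eq_card_roots.symm
  have hN := Multiset.esymm_mul_esymm_le_of_card_eq_add_two hroots
  rw [coeff_eq_esymm_roots_of_splits hp (by omega), coeff_eq_esymm_roots_of_splits hp (by omega),
    coeff_eq_esymm_roots_of_splits hp (by omega), hd]
  simp only [Nat.sub_zero, show d + 2 - 1 = d + 1 by omega, show d + 2 - 2 = d by omega]
  calc 2 * (d + 2) * (p.leadingCoeff * (-1) ^ (d + 2) * p.roots.esymm (d + 2) *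
          (p.leadingCoeff * (-1) ^ d * p.roots.esymm d))
      = p.leadingCoeff ^ 2 * ((-1) ^ d) ^ 2 *
          (2 * (d + 2) * (p.roots.esymm d * p.roots.esymm (d + 2))) := by ring
    _ ≤ p.leadingCoeff ^ 2 * ((-1) ^ d) ^ 2 * ((d + 1) * p.roots.esymm (d + 1) ^ 2) := by
      gcongr
    _ = (d + 1) * (p.leadingCoeff * (-1) ^ (d + 1) * p.roots.esymm (d + 1)) ^ 2 := by
      ring

end Polynomial

namespace Multiset

theorem mul_esymm_mul_esymm_le_of_card_eq {s : Multiset ℝ} {j k : ℕ} (hs : card s = j + k + 2) :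
    (j + 2) * (k + 2) * (s.esymm j * s.esymm (j + 2)) ≤
      (j + 1) * (k + 1) * s.esymm (j + 1) ^ 2 := by
  set P := (s.map fun r => X + C r).prod
  have hP : P.Splits := Splits.multisetProd (by simp [Splits.X_add_C])
  have hPdeg : P.natDegree = card s := by
    simp [P, natDegree_multiset_prod_of_monic, monic_X_add_C]
  -- `Q` has real roots, degree `j + 2`, and lowest coefficients `σ_{j+2}, σ_{j+1}, σ_j` times
  -- factorial factors
  set Q := derivative^[k] P
  have hcoeff : ∀ i ≤ j + 2, Q.coeff i = ((i + k).descFactorial k : ℝ) * s.esymm (j + 2 - i) := by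
    intro i hi
    rw [coeff_iterate_derivative, nsmul_eq_mul, prod_X_add_C_coeff s (by omega), hs]
    congr 2
    omega
  have hQdeg : Q.natDegree = j + 2 := by
    refine natDegree_eq_of_le_of_coeff_ne_zero ?_ ?_
    · exact (natDegree_iterate_derivative P k).trans (by omega)
    · rw [hcoeff _ le_rfl, Nat.sub_self, esymm_zero, mul_one, Nat.cast_ne_zero,
        Ne, Nat.descFactorial_eq_zero_iff_lt]
      omega
  have hN := (hP.iterate_derivative k).two_mul_coeff_zero_mul_coeff_two_le hQdeg
  rw [hcoeff 0 (by omega), hcoeff 1 (by omega), hcoeff 2 (by omega)] at hN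
  simp only [zero_add, Nat.sub_zero, Nat.add_sub_cancel, show j + 2 - 1 = j + 1 by omega] at hN
  set F := (k.descFactorial k : ℝ)
  have hF : 0 < F := by
    rw [Nat.cast_pos, Nat.descFactorial_self]
    exact k.factorial_pos
  have hD1 : ((1 + k).descFactorial k : ℝ) = (k + 1) * F := by
    have := Nat.succ_descFactorial k k
    rw [Nat.add_sub_cancel_left, one_mul, add_comm k 1] at this
    rw [this]
    push_cast
    ring
  have hD2 : ((2 + k).descFactorial k : ℝ) = (k + 2) * (k + 1) * F / 2 := by
    have := Nat.succ_descFactorial (k + 1) k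
    rw [show k + 1 + 1 - k = 2 by omega, show k + 1 + 1 = 2 + k by ring, add_comm k 1] at this
    have hR : (2 : ℝ) * (2 + k).descFactorial k = (2 + k) * (1 + k).descFactorial k := by
      exact_mod_cast this
    rw [hD1] at hR
    linear_combination hR / 2
  rw [hD1, hD2] at hN
  refine le_of_mul_le_mul_left ?_ (by positivity : (0 : ℝ) < (k + 1) * F ^ 2)
  linear_combination hN

theorem esymm_mul_esymm_le_sq (s : Multiset ℝ) (j : ℕ) :
    s.esymm j * s.esymm (j + 2) ≤ s.esymm (j + 1) ^ 2 := by
  rcases lt_or_ge (card s) (j + 2) with h | h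
  · rw [esymm_eq_zero_of_card_lt h, mul_zero]
    positivity
  · obtain ⟨k, hk⟩ : ∃ k, card s = j + k + 2 := ⟨card s - (j + 2), by omega⟩
    have hN := mul_esymm_mul_esymm_le_of_card_eq hk
    by_contra! hlt
    have hX := (sq_nonneg (s.esymm (j + 1))).trans_lt hlt
    nlinarith [mul_lt_mul_of_pos_left hlt (by positivity : (0 : ℝ) < (j + 1) * (k + 1)),
      mul_nonneg (Nat.cast_nonneg j : (0 : ℝ) ≤ j) hX.le,
      mul_nonneg (Nat.cast_nonneg k : (0 : ℝ) ≤ k) hX.le]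

/-- `Γ_m^+`; the condition at `j = 0` holds automatically. -/
def gardingCone (m : ℕ) : Set (Multiset ℝ) := {s | ∀ j ≤ m, 0 < s.esymm j}

theorem erase_mem_gardingCone {s : Multiset ℝ} {a : ℝ} {m : ℕ} (hs : s ∈ gardingCone (m + 1))
    (ha : a ∈ s) : s.erase a ∈ gardingCone m := by
  induction m with
  | zero =>
    intro j hj
    rw [Nat.le_zero.mp hj, esymm_zero]
    exact one_pos
  | succ m ih =>
    have hprev := ih fun j hj => hs j (by omega)
    intro j hj
    rcases Nat.lt_or_ge j (m + 1) with hj' | hj'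
    · exact hprev j (by omega)
    obtain rfl : j = m + 1 := by omega
    -- if `c_{m+1} ≤ 0` then `a c_m > -c_{m+1} ≥ 0` and `c_{m+2} > -a c_{m+1}`, whence
    -- `c_m c_{m+2} > c_{m+1}^2`, against Newton
    by_contra! hneg
    have h1 := hs (m + 1) (by omega)
    have h2 := hs (m + 2) le_rfl
    rw [esymm_succ_eq_of_mem ha] at h1 h2
    have hc := hprev m le_rfl
    have hN := esymm_mul_esymm_le_sq (s.erase a) m
    nlinarith [mul_pos hc h2, mul_nonneg h1.le (neg_nonneg.2 hneg)]

theorem succ_mul_esymm_le_card_mul_mul_esymm_erase {s : Multiset ℝ} {m : ℕ} {a : ℝ}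
    (hs : s ∈ gardingCone (m + 1)) (ha : a ∈ s) (hmax : ∀ b ∈ s, b ≤ a) :
    (m + 1) * s.esymm (m + 1) ≤ card s * (a * (s.erase a).esymm m) := by
  set t := s.erase a
  have hexp : s.esymm (m + 1) = a * t.esymm m + t.esymm (m + 1) := esymm_succ_eq_of_mem ha m
  have hpos := hs (m + 1) le_rfl
  have ht := erase_mem_gardingCone hs ha
  have hm : (m : ℝ) + 1 ≤ card s := by
    have : m + 1 ≤ card s := by
      by_contra! h
      exact hpos.ne' (esymm_eq_zero_of_card_lt h)
    exact_mod_cast this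
  rcases le_or_gt (t.esymm (m + 1)) 0 with hneg | hpos'
  · nlinarith
  · have ht' : t ∈ gardingCone (m + 1) := fun j hj => by
      rcases Nat.lt_or_ge j (m + 1) with hj' | hj'
      · exact ht j (by omega)
      · rwa [show j = m + 1 by omega]
    have hcard : (card t : ℝ) = card s - 1 := by
      rw [card_erase_of_mem ha, Nat.pred_eq_sub_one,
        Nat.cast_pred (card_pos_iff_exists_mem.mpr ⟨a, ha⟩)]
    have heuler : (m + 1) * t.esymm (m + 1) ≤ a * ((card t - m) * t.esymm m) := by
      rw [← sum_map_mul_esymm_erase, ← sum_map_esymm_erase, ← sum_map_mul_left]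
      exact sum_map_le_sum_map _ _ fun b hb => mul_le_mul_of_nonneg_right
        (hmax b (mem_of_mem_erase hb)) (erase_mem_gardingCone ht' hb m le_rfl).le
    rw [hcard] at heuler
    linear_combination (m + 1) * hexp + heuler

end Multiset

theorem stmt_4_general {n : ℕ} (hn : 0 < n) (m : ℕ) (hm : 1 ≤ m)
    (κ : Fin n → ℝ) (hΓ : ∀ j, 1 ≤ j → j ≤ m → 0 < esym j κ)
    (hsort : ∀ i j : Fin n, i ≤ j → κ j ≤ κ i) :
    ((m : ℝ) / (n : ℝ)) * esym m κ
      ≤ κ ⟨0, hn⟩ * esymRem (m - 1) κ ⟨0, hn⟩ := by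
  obtain ⟨m, rfl⟩ : ∃ k, m = k + 1 := ⟨m - 1, by omega⟩
  set i₀ : Fin n := ⟨0, hn⟩
  set s := univ.val.map κ
  have hesym (j : ℕ) : esym j κ = s.esymm j := (esymm_map_val κ _ j).symm
  have hmem : κ i₀ ∈ s := Multiset.mem_map_of_mem κ (mem_univ i₀)
  have hrem : esymRem m κ i₀ = (s.erase (κ i₀)).esymm m := by
    rw [esymRem, ← esymm_map_val, erase_val, Multiset.map_erase_of_mem _ _ (mem_univ i₀)]
  have hcone : s ∈ Multiset.gardingCone (m + 1) := fun j hj => by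
    rcases j with _ | j
    · simp [Multiset.esymm_zero]
    · exact hesym _ ▸ hΓ _ (by omega) hj
  have hmax : ∀ b ∈ s, b ≤ κ i₀ := by
    simp only [s, Multiset.mem_map, mem_val, mem_univ, true_and, forall_exists_index]
    rintro _ i rfl
    exact hsort i₀ i (Nat.zero_le i.val)
  have key := Multiset.succ_mul_esymm_le_card_mul_mul_esymm_erase hcone hmem hmax
  rw [Multiset.card_map, card_val, card_univ, Fintype.card_fin] at key
  rw [Nat.add_sub_cancel, hesym, hrem, div_mul_eq_mul_div, div_le_iff₀ (by exact_mod_cast hn)]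
  push_cast
  linarith

/-- If κ ∈ Γ_m^+ is ordered decreasingly, then κ_1 σ_{m-1}(κ|1) ≥ (m/n) σ_m(κ). -/
theorem stmt_4 {n : ℕ} (hn : 0 < n) (m : ℕ) (hm : 1 ≤ m) (hmn : m ≤ n)
    (κ : Fin n → ℝ) (hΓ : ∀ j, 1 ≤ j → j ≤ m → 0 < esym j κ)
    (hsort : ∀ i j : Fin n, i ≤ j → κ j ≤ κ i) :
    ((m : ℝ) / (n : ℝ)) * esym m κ
      ≤ κ ⟨0, hn⟩ * esymRem (m - 1) κ ⟨0, hn⟩ :=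
  stmt_4_general hn m hm κ hΓ hsort
end

section
/- If κ ∈ Γ_m^+, then for any subset {i_1, …, i_j} ⊆ {1,…,n} and any l with l + j ≤ m, one has σ_l(κ | i_1 ⋯ i_j) > 0, where σ_l(κ | i_1 ⋯ i_j) denotes the l-th elementary symmetric polynomial of κ with the entries κ_{i_1}, …, κ_{i_j} removed. -/
open Finset

/-- The `m`-th elementary symmetric polynomial of the entries of `κ` indexed by `t`. -/
noncomputable def esymOn {n : ℕ} (m : ℕ) (κ : Fin n → ℝ) (t : Finset (Fin n)) : ℝ :=
  ∑ s ∈ Finset.powersetCard m t, ∏ j ∈ s, κ j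

namespace Stmt6Aux

open Polynomial

lemma esymm_zero' (μ : Multiset ℝ) : μ.esymm 0 = 1 := by
  simp [Multiset.esymm, Multiset.powersetCard_zero_left]

lemma esymm_of_card_lt {μ : Multiset ℝ} {k : ℕ} (h : Multiset.card μ < k) :
    μ.esymm k = 0 := by
  simp [Multiset.esymm, Multiset.powersetCard_eq_empty _ h]

lemma msum_nonneg {μ : Multiset ℝ} (h : ∀ x ∈ μ, 0 ≤ x) : 0 ≤ μ.sum := by
  induction μ using Multiset.induction with
  | empty => simp
  | cons a s ih =>
    rw [Multiset.sum_cons]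
    have h1 := h a (Multiset.mem_cons_self a s)
    have h2 := ih fun x hx => h x (Multiset.mem_cons_of_mem hx)
    linarith

lemma msum_pos {μ : Multiset ℝ} (h : ∀ x ∈ μ, 0 < x) (h0 : μ ≠ 0) : 0 < μ.sum := by
  induction μ using Multiset.induction with
  | empty => exact absurd rfl h0
  | cons a s ih =>
    rw [Multiset.sum_cons]
    have h1 := h a (Multiset.mem_cons_self a s)
    have h2 : 0 ≤ s.sum := msum_nonneg fun x hx => (h x (Multiset.mem_cons_of_mem hx)).le
    linarith

lemma mprod_pos {μ : Multiset ℝ} (h : ∀ x ∈ μ, 0 < x) : 0 < μ.prod := by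
  induction μ using Multiset.induction with
  | empty => simp
  | cons a s ih =>
    rw [Multiset.prod_cons]
    exact mul_pos (h a (Multiset.mem_cons_self a s))
      (ih fun x hx => h x (Multiset.mem_cons_of_mem hx))

lemma esymm_pos {μ : Multiset ℝ} (h : ∀ x ∈ μ, 0 < x) {k : ℕ} (hk : k ≤ Multiset.card μ) :
    0 < μ.esymm k := by
  rw [Multiset.esymm]
  apply msum_pos
  · intro x hx
    rw [Multiset.mem_map] at hx
    obtain ⟨v, hv, rfl⟩ := hx
    rw [Multiset.mem_powersetCard] at hv
    exact mprod_pos fun y hy => h y (Multiset.mem_of_le hv.1 hy)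
  · intro hc
    have hcard : Multiset.card ((μ.powersetCard k).map Multiset.prod)
        = (Multiset.card μ).choose k := by
      rw [Multiset.card_map, Multiset.card_powersetCard]
    rw [hc] at hcard
    simp only [Multiset.card_zero] at hcard
    have := Nat.choose_pos hk
    omega

lemma esymm_cons (a : ℝ) (μ : Multiset ℝ) (k : ℕ) :
    (a ::ₘ μ).esymm (k + 1) = μ.esymm (k + 1) + a * μ.esymm k := by
  rw [Multiset.esymm, Multiset.esymm, Multiset.esymm, Multiset.powersetCard_cons,
    Multiset.map_add, Multiset.sum_add, Multiset.map_map]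
  congr 1
  rw [← Multiset.sum_map_mul_left]
  apply congrArg
  apply Multiset.map_congr rfl
  intro v _
  simp [Multiset.prod_cons]

/-- The monic polynomial with roots `-r` for `r` in `μ`. -/
noncomputable def Pm (μ : Multiset ℝ) : ℝ[X] := (μ.map fun r => X + C r).prod

lemma Pm_eq (μ : Multiset ℝ) :
    Pm μ = ((μ.map fun r => -r).map fun r => X - C r).prod := by
  rw [Pm, Multiset.map_map]
  apply congrArg
  apply Multiset.map_congr rfl
  intro r _
  simp [sub_neg_eq_add]

lemma Pm_natDegree (μ : Multiset ℝ) : (Pm μ).natDegree = Multiset.card μ := by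
  rw [Pm_eq, natDegree_multiset_prod_X_sub_C_eq_card, Multiset.card_map]

lemma Pm_roots (μ : Multiset ℝ) : (Pm μ).roots = μ.map fun r => -r := by
  rw [Pm_eq, roots_multiset_prod_X_sub_C]

lemma Pm_coeff (μ : Multiset ℝ) {k : ℕ} (h : k ≤ Multiset.card μ) :
    (Pm μ).coeff k = μ.esymm (Multiset.card μ - k) :=
  Multiset.prod_X_add_C_coeff μ h

lemma Pm_coeff' (μ : Multiset ℝ) {j : ℕ} (h : j ≤ Multiset.card μ) :
    (Pm μ).coeff (Multiset.card μ - j) = μ.esymm j := by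
  rw [Pm_coeff μ (Nat.sub_le _ _), Nat.sub_sub_self h]

lemma Pm_shift (μ : Multiset ℝ) (t : ℝ) :
    Pm (μ.map (· + t)) = taylor t (Pm μ) := by
  rw [taylor_apply, Pm, Pm, multiset_prod_comp, Multiset.map_map, Multiset.map_map]
  apply congrArg
  apply Multiset.map_congr rfl
  intro r _
  simp only [Function.comp_apply, add_comp, X_comp, C_comp]
  rw [C_add]
  ring

lemma esymm_shift (μ : Multiset ℝ) (t : ℝ) {k : ℕ} (hk : k ≤ Multiset.card μ) :
    (μ.map (· + t)).esymm k = (hasseDeriv (Multiset.card μ - k) (Pm μ)).eval t := by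
  have hc : Multiset.card (μ.map (· + t)) = Multiset.card μ := Multiset.card_map _ _
  calc (μ.map (· + t)).esymm k
      = (Pm (μ.map (· + t))).coeff (Multiset.card (μ.map (· + t)) - k) :=
        (Pm_coeff' _ (by rw [hc]; exact hk)).symm
    _ = (taylor t (Pm μ)).coeff (Multiset.card μ - k) := by rw [Pm_shift, hc]
    _ = (hasseDeriv (Multiset.card μ - k) (Pm μ)).eval t := by rw [taylor_coeff]

lemma shift_pos {μ : Multiset ℝ} {m : ℕ}
    (hμ : ∀ j, 1 ≤ j → j ≤ m → 0 < μ.esymm j) {t : ℝ} (ht : 0 ≤ t) :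
    ∀ j, j ≤ m → 0 < (μ.map (· + t)).esymm j := by
  have hμ' : ∀ j, j ≤ m → 0 < μ.esymm j := by
    intro j hj
    rcases Nat.eq_zero_or_pos j with rfl | h
    · rw [esymm_zero']; norm_num
    · exact hμ j h hj
  intro j hj
  have hjc : j ≤ Multiset.card μ := by
    by_contra hlt
    push_neg at hlt
    have := hμ' j hj
    rw [esymm_of_card_lt hlt] at this
    exact lt_irrefl 0 this
  rw [esymm_shift μ t hjc]
  set N := Multiset.card μ with hN
  have hdeg : (hasseDeriv (N - j) (Pm μ)).natDegree < j + 1 := by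
    have h1 := natDegree_hasseDeriv_le (Pm μ) (N - j)
    rw [Pm_natDegree] at h1
    omega
  rw [eval_eq_sum_range' hdeg]
  apply Finset.sum_pos'
  · intro i hi
    rw [Finset.mem_range] at hi
    rw [hasseDeriv_coeff, Pm_coeff μ (show i + (N - j) ≤ N by omega),
      show N - (i + (N - j)) = j - i by omega]
    have h1 : (0:ℝ) ≤ ((i + (N - j)).choose (N - j) : ℝ) := by positivity
    have h2 : 0 < μ.esymm (j - i) := hμ' _ (by omega)
    have h3 : (0:ℝ) ≤ t ^ i := by positivity
    exact mul_nonneg (mul_nonneg h1 h2.le) h3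
  · refine ⟨0, Finset.mem_range.mpr (by omega), ?_⟩
    rw [hasseDeriv_coeff, zero_add, Pm_coeff μ (Nat.sub_le _ _), Nat.sub_sub_self hjc,
      pow_zero, mul_one]
    have h1 : (0:ℝ) < ((N - j).choose (N - j) : ℝ) := by simp [Nat.choose_self]
    exact mul_pos h1 (hμ' j hj)

lemma card_roots_iterate (P : ℝ[X]) (d : ℕ) :
    Multiset.card P.roots - d ≤ Multiset.card (derivative^[d] P).roots := by
  induction d with
  | zero => simp
  | succ d ih =>
    rw [Function.iterate_succ_apply']
    have := card_roots_le_derivative (derivative^[d] P)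
    omega

/-- The "Newton edge" lemma: for real numbers, if the elementary symmetric functions of
order `< k` are positive and the one of order `k` vanishes, then the one of order `k+1`
is nonpositive. -/
lemma newton_edge {ν : Multiset ℝ} {k : ℕ} (hk : 1 ≤ k)
    (hpos : ∀ j, j < k → 0 < ν.esymm j) (h0 : ν.esymm k = 0) :
    ν.esymm (k + 1) ≤ 0 := by
  by_contra hgt
  push_neg at hgt
  set N := Multiset.card ν with hN
  have hcard : k + 1 ≤ N := by
    by_contra h
    push_neg at h
    rw [esymm_of_card_lt h] at hgt
    exact lt_irrefl 0 hgt
  set d := N - (k + 1) with hd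
  set H := derivative^[d] (Pm ν) with hH
  have hdesc : ∀ j : ℕ, (0:ℝ) < ((j + d).descFactorial d : ℝ) := by
    intro j
    have h1 : (j + d).descFactorial d ≠ 0 := by
      rw [Ne, Nat.descFactorial_eq_zero_iff_lt]
      omega
    have h2 : 0 < (j + d).descFactorial d := Nat.pos_of_ne_zero h1
    exact_mod_cast h2
  have hcoeff : ∀ j, j ≤ k + 1 →
      H.coeff j = ((j + d).descFactorial d : ℝ) * ν.esymm (k + 1 - j) := by
    intro j hj
    rw [hH, Polynomial.coeff_iterate_derivative, Pm_coeff ν (show j + d ≤ N by omega),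
      show N - (j + d) = k + 1 - j by omega, nsmul_eq_mul]
  have hco_top : H.coeff (k + 1) = (((k + 1) + d).descFactorial d : ℝ) := by
    rw [hcoeff (k + 1) le_rfl, Nat.sub_self, esymm_zero', mul_one]
  have hdegle : H.natDegree ≤ k + 1 := by
    have h1 := natDegree_iterate_derivative (Pm ν) d
    rw [Pm_natDegree, ← hH] at h1
    omega
  have hdeg : H.natDegree = k + 1 := by
    apply le_antisymm hdegle
    apply le_natDegree_of_ne_zero
    rw [hco_top]
    exact (hdesc _).ne'
  have hrootsP : Multiset.card (Pm ν).roots = N := by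
    rw [Pm_roots, Multiset.card_map]
  have hrootsH : Multiset.card H.roots = k + 1 := by
    have h1 := card_roots_iterate (Pm ν) d
    rw [hrootsP, ← hH] at h1
    have h2 := H.card_roots'
    rw [hdeg] at h2
    omega
  have hnn : ∀ j, 0 ≤ H.coeff j := by
    intro j
    by_cases hj : j ≤ k + 1
    · rw [hcoeff j hj]
      have hnn' : 0 ≤ ν.esymm (k + 1 - j) := by
        rcases Nat.lt_trichotomy j 1 with h | h | h
        · have hj0 : j = 0 := by omega
          subst hj0
          simpa using hgt.le
        · subst h
          rw [show k + 1 - 1 = k from rfl, h0]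
        · exact (hpos _ (by omega)).le
      exact mul_nonneg (hdesc j).le hnn'
    · push_neg at hj
      rw [coeff_eq_zero_of_natDegree_lt (by omega : H.natDegree < j)]
  have hc0 : 0 < H.coeff 0 := by
    rw [hcoeff 0 (by omega), Nat.sub_zero]
    exact mul_pos (hdesc 0) hgt
  have hc1 : H.coeff 1 = 0 := by
    rw [hcoeff 1 (by omega), show k + 1 - 1 = k from rfl, h0, mul_zero]
  have hrneg : ∀ r ∈ H.roots, r < 0 := by
    intro r hr
    by_contra hge
    push_neg at hge
    have heval : H.eval r = 0 := isRoot_of_mem_roots hr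
    have hsum : H.eval r = ∑ i ∈ Finset.range (k + 2), H.coeff i * r ^ i :=
      eval_eq_sum_range' (by omega : H.natDegree < k + 2) r
    have hge0 : H.coeff 0 * r ^ 0 ≤ ∑ i ∈ Finset.range (k + 2), H.coeff i * r ^ i := by
      apply Finset.single_le_sum (f := fun i => H.coeff i * r ^ i)
      · intro i _
        exact mul_nonneg (hnn i) (pow_nonneg hge i)
      · exact Finset.mem_range.mpr (by omega)
    rw [pow_zero, mul_one] at hge0
    rw [hsum] at heval
    linarith
  have hlc : 0 < H.leadingCoeff := by
    rw [Polynomial.leadingCoeff, hdeg, hco_top]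
    exact hdesc _
  have hfac := Polynomial.C_leadingCoeff_mul_prod_multiset_X_sub_C
    (p := H) (by rw [hrootsH, hdeg])
  have hQ : (H.roots.map fun a => X - C a).prod.coeff 1
      = (H.roots.map fun a => -a).esymm k := by
    have hmap : (H.roots.map fun a => X - C a)
        = ((H.roots.map fun a => -a).map fun r => X + C r) := by
      rw [Multiset.map_map]
      apply Multiset.map_congr rfl
      intro a _
      simp [sub_eq_add_neg]
    rw [hmap, Multiset.prod_X_add_C_coeff _ (by rw [Multiset.card_map, hrootsH]; omega)]
    congr 1
    rw [Multiset.card_map, hrootsH]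
    omega
  have hQpos : 0 < (H.roots.map fun a => -a).esymm k := by
    apply esymm_pos
    · intro x hx
      rw [Multiset.mem_map] at hx
      obtain ⟨r, hr, rfl⟩ := hx
      linarith [hrneg r hr]
    · rw [Multiset.card_map, hrootsH]
      omega
  have hfin : H.coeff 1
      = H.leadingCoeff * (H.roots.map fun a => X - C a).prod.coeff 1 := by
    conv_lhs => rw [← hfac]
    rw [coeff_C_mul]
  rw [hc1, hQ] at hfin
  nlinarith [mul_pos hlc hQpos]

/-- Removing one entry from a multiset in `Γ_m^+` keeps the lower symmetric functions
positive. -/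
lemma remove_one : ∀ m : ℕ, ∀ (a : ℝ) (μ : Multiset ℝ), 1 ≤ m →
    (∀ j, 1 ≤ j → j ≤ m → 0 < (a ::ₘ μ).esymm j) →
    ∀ l, l ≤ m - 1 → 0 < μ.esymm l := by
  intro m
  induction m using Nat.strong_induction_on with
  | _ m IH =>
  intro a μ hm hΓ l hl
  rcases Nat.eq_zero_or_pos l with rfl | hl1
  · rw [esymm_zero']; norm_num
  by_cases hcase : l < m - 1
  · exact IH (m - 1) (by omega) a μ (by omega)
      (fun j h1 h2 => hΓ j h1 (by omega)) l (by omega)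
  · have hlm : l = m - 1 := by omega
    have hm2 : 2 ≤ m := by omega
    subst hlm
    set N := Multiset.card μ with hN
    have hmN : m ≤ N + 1 := by
      by_contra h
      push_neg at h
      have h2 := hΓ m hm le_rfl
      rw [esymm_of_card_lt (by rw [Multiset.card_cons]; omega)] at h2
      exact lt_irrefl 0 h2
    by_contra hneg
    push_neg at hneg
    have hm1N : m - 1 ≤ N := by omega
    set Q := hasseDeriv (N - (m - 1)) (Pm μ) with hQ
    have hgt : ∀ t : ℝ, (μ.map (· + t)).esymm (m - 1) = Q.eval t := fun t =>
      esymm_shift μ t hm1N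
    have hg0 : Q.eval 0 ≤ 0 := by
      rw [← hgt 0]
      have hid : μ.map (· + (0:ℝ)) = μ := by
        rw [show ((· + (0:ℝ)) : ℝ → ℝ) = id by funext x; simp, Multiset.map_id]
      rw [hid]
      exact hneg
    set T : ℝ := 1 + (μ.map fun x => |x|).sum with hT
    have habs : ∀ x ∈ μ, |x| ≤ (μ.map fun x => |x|).sum := by
      intro x hx
      exact Multiset.single_le_sum
        (fun y hy => by
          rw [Multiset.mem_map] at hy
          obtain ⟨z, _, rfl⟩ := hy
          exact abs_nonneg z) _ (Multiset.mem_map_of_mem _ hx)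
    have hsumnn : 0 ≤ (μ.map fun x => |x|).sum := msum_nonneg fun y hy => by
      rw [Multiset.mem_map] at hy
      obtain ⟨z, _, rfl⟩ := hy
      exact abs_nonneg z
    have hT0 : (0:ℝ) ≤ T := by rw [hT]; linarith
    have hgT : 0 < Q.eval T := by
      rw [← hgt T]
      apply esymm_pos
      · intro x hx
        rw [Multiset.mem_map] at hx
        obtain ⟨y, hy, rfl⟩ := hx
        have h1 := habs y hy
        have h2 := neg_abs_le y
        rw [hT]
        linarith
      · rw [Multiset.card_map]
        exact hm1N
    have hcont : ContinuousOn (fun t => Q.eval t) (Set.Icc 0 T) :=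
      (Polynomial.continuous Q).continuousOn
    have hmem : (0:ℝ) ∈ Set.Icc (Q.eval 0) (Q.eval T) := ⟨hg0, hgT.le⟩
    obtain ⟨t₀, ht₀mem, ht₀⟩ := intermediate_value_Icc hT0 hcont hmem
    have ht₀0 : 0 ≤ t₀ := ht₀mem.1
    set μ' := μ.map (· + t₀) with hμ'
    have hzero : μ'.esymm (m - 1) = 0 := by rw [hμ', hgt t₀]; exact ht₀
    have hΓ' : ∀ j, 1 ≤ j → j ≤ m → 0 < ((a + t₀) ::ₘ μ').esymm j := by
      intro j h1 h2
      have h3 := shift_pos (μ := a ::ₘ μ) hΓ ht₀0 j h2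
      rwa [Multiset.map_cons] at h3
    have hsmall : ∀ j, j < m - 1 → 0 < μ'.esymm j := by
      intro j hj
      rcases Nat.eq_zero_or_pos j with rfl | hj1
      · rw [esymm_zero']; norm_num
      · exact IH (m - 1) (by omega) (a + t₀) μ' (by omega)
          (fun i hi1 hi2 => hΓ' i hi1 (by omega)) j (by omega)
    have hle := newton_edge (k := m - 1) (by omega) hsmall hzero
    have hmm : m - 1 + 1 = m := by omega
    rw [hmm] at hle
    have hconsm : ((a + t₀) ::ₘ μ').esymm m = μ'.esymm m + (a + t₀) * μ'.esymm (m - 1) := by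
      have h4 := esymm_cons (a + t₀) μ' (m - 1)
      rwa [hmm] at h4
    have h5 := hΓ' m hm le_rfl
    rw [hconsm, hzero, mul_zero, add_zero] at h5
    linarith

lemma remove_many (ν : Multiset ℝ) : ∀ (μ : Multiset ℝ) (m : ℕ),
    (∀ j, 1 ≤ j → j ≤ m → 0 < (ν + μ).esymm j) →
    ∀ l, l + Multiset.card ν ≤ m → 0 < μ.esymm l := by
  induction ν using Multiset.induction with
  | empty =>
    intro μ m hΓ l hl
    rcases Nat.eq_zero_or_pos l with rfl | hl1
    · rw [esymm_zero']; norm_num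
    · have h1 := hΓ l hl1 (by simpa using hl)
      rwa [zero_add] at h1
  | cons a ν IH =>
    intro μ m hΓ l hl
    rw [Multiset.card_cons] at hl
    have hm : 1 ≤ m := by omega
    have hkey := remove_one m a (ν + μ) hm (by
      intro j h1 h2
      have h3 := hΓ j h1 h2
      rwa [Multiset.cons_add] at h3)
    exact IH μ (m - 1) (fun j h1 h2 => hkey j (by omega)) l (by omega)

end Stmt6Aux

/-- If κ ∈ Γ_m^+, then σ_l(κ | i_1⋯i_j) > 0 whenever l + j ≤ m,
    where the entries indexed by the set `s` (of cardinality j) are removed. -/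
theorem stmt_6 {n : ℕ} (m : ℕ) (hm : 1 ≤ m) (hmn : m ≤ n)
    (κ : Fin n → ℝ) (hΓ : ∀ j, 1 ≤ j → j ≤ m → 0 < esym j κ) :
    ∀ (s : Finset (Fin n)) (l : ℕ), l + s.card ≤ m → 0 < esymOn l κ sᶜ := by
  intro s l hl
  have hdisj : Disjoint s sᶜ := disjoint_compl_right
  have huniv : s.disjUnion sᶜ hdisj = Finset.univ := by
    ext x
    simp [Finset.mem_disjUnion, em]
  have hval : s.val + (sᶜ).val = (Finset.univ : Finset (Fin n)).val := by
    rw [← huniv]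
    rfl
  have hsplit : ((Finset.univ : Finset (Fin n)).val.map κ : Multiset ℝ)
      = s.val.map κ + (sᶜ).val.map κ := by
    rw [← Multiset.map_add, hval]
  have hbridgeAll : ∀ k, esym k κ = ((Finset.univ : Finset (Fin n)).val.map κ).esymm k := by
    intro k
    rw [Finset.esymm_map_val]
    rfl
  have hbridgeC : ∀ k, esymOn k κ sᶜ = ((sᶜ).val.map κ).esymm k := by
    intro k
    rw [Finset.esymm_map_val]
    rfl
  rw [hbridgeC]
  apply Stmt6Aux.remove_many (s.val.map κ) ((sᶜ).val.map κ) m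
  · intro j h1 h2
    have h3 := hΓ j h1 h2
    rwa [hbridgeAll, hsplit] at h3
  · rw [Multiset.card_map]
    exact hl
end

section
/- For κ ∈ Γ_k^+ with k ≥ 1 and β > 0, setting f(κ) = σ_k(κ)^{1/β} and H = σ_1(κ), one has Σ_i (∂f/∂κ_i) κ_i² = (1/β) H σ_k^{1/β} − ((k+1)/β) σ_k^{(1−β)/β} σ_{k+1} ≥ C(n,k)^{−1/k} (k/β) f^{1 + β/k}. -/
open Finset

lemma esym_one {n : ℕ} (κ : Fin n → ℝ) : esym 1 κ = ∑ i, κ i := by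
  simp [esym, Finset.powersetCard_one]

lemma powersetCard_erase {n m : ℕ} (i : Fin n) :
    Finset.powersetCard m ((Finset.univ : Finset (Fin n)).erase i)
      = (Finset.powersetCard m (Finset.univ : Finset (Fin n))).filter (fun s => i ∉ s) := by
  ext s
  simp only [Finset.mem_powersetCard, Finset.mem_filter, Finset.subset_erase]
  tauto

lemma J {n : ℕ} (m : ℕ) (hm : m ≤ n) (κ : Fin n → ℝ) :
    ∑ i, esymRem m κ i = ((n : ℝ) - m) * esym m κ := by
  classical
  have key : ∀ i : Fin n, esymRem m κ i
      = ∑ s ∈ Finset.powersetCard m (Finset.univ : Finset (Fin n)),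
          (if i ∉ s then ∏ j ∈ s, κ j else 0) := by
    intro i
    rw [esymRem, powersetCard_erase, Finset.sum_filter]
  simp_rw [key]
  rw [Finset.sum_comm, esym, Finset.mul_sum]
  refine Finset.sum_congr rfl fun s hs => ?_
  rw [Finset.sum_ite, Finset.sum_const, Finset.sum_const, smul_zero, add_zero, nsmul_eq_mul]
  have hcard : (Finset.univ.filter (fun x : Fin n => x ∉ s)).card = n - m := by
    have : Finset.univ.filter (fun x : Fin n => x ∉ s) = sᶜ := by
      ext x; simp
    rw [this, Finset.card_compl, (Finset.mem_powersetCard.1 hs).2, Fintype.card_fin]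
  rw [hcard]
  have : ((n - m : ℕ) : ℝ) = (n : ℝ) - m := by
    push_cast [hm]; ring
  rw [this]

lemma esym_of_lt {n m : ℕ} (h : n < m) (κ : Fin n → ℝ) : esym m κ = 0 := by
  rw [esym, Finset.powersetCard_eq_empty.2 (by simpa using h), Finset.sum_empty]

lemma esymRem_of_le {n m : ℕ} (h : n ≤ m) (κ : Fin n → ℝ) (i : Fin n) : esymRem m κ i = 0 := by
  have hi := i.isLt
  rw [esymRem, Finset.powersetCard_eq_empty.2 ?_, Finset.sum_empty]
  rw [Finset.card_erase_of_mem (Finset.mem_univ i), Finset.card_univ, Fintype.card_fin]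
  omega

lemma I1 {n : ℕ} (m : ℕ) (κ : Fin n → ℝ) (i : Fin n) :
    esym (m + 1) κ = esymRem (m + 1) κ i + κ i * esymRem m κ i := by
  classical
  have hu : (Finset.univ : Finset (Fin n)) = insert i (Finset.univ.erase i) := by simp
  rw [esym, hu, Finset.powersetCard_succ_insert (Finset.notMem_erase i _), Finset.sum_union ?dis]
  case dis =>
    rw [Finset.disjoint_left]
    intro s hs hs'
    obtain ⟨t, ht, rfl⟩ := Finset.mem_image.1 hs'
    exact Finset.notMem_erase i _ ((Finset.mem_powersetCard.1 hs).1 (Finset.mem_insert_self i t))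
  congr 1
  rw [Finset.sum_image ?inj]
  case inj =>
    intro a ha b hb hab
    have ha' : i ∉ a := fun h => Finset.notMem_erase i _ ((Finset.mem_powersetCard.1 ha).1 h)
    have hb' : i ∉ b := fun h => Finset.notMem_erase i _ ((Finset.mem_powersetCard.1 hb).1 h)
    rw [← Finset.erase_insert ha', hab, Finset.erase_insert hb']
  rw [esymRem, Finset.mul_sum]
  refine Finset.sum_congr rfl fun s hs => ?_
  have hs' : i ∉ s := fun h => Finset.notMem_erase i _ ((Finset.mem_powersetCard.1 hs).1 h)
  rw [Finset.prod_insert hs']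

lemma I2 {n : ℕ} (m : ℕ) (κ : Fin n → ℝ) :
    ∑ i, κ i * esymRem m κ i = ((m : ℝ) + 1) * esym (m + 1) κ := by
  have h1 : ∀ i : Fin n, κ i * esymRem m κ i = esym (m + 1) κ - esymRem (m + 1) κ i := by
    intro i; rw [I1 m κ i]; ring
  simp_rw [h1]
  rw [Finset.sum_sub_distrib, Finset.sum_const, Finset.card_univ, Fintype.card_fin,
    nsmul_eq_mul]
  rcases le_or_gt (m + 1) n with hmn | hmn
  · rw [J (m + 1) hmn κ]
    push_cast
    ring
  · rw [esym_of_lt hmn κ]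
    have : ∀ i : Fin n, esymRem (m + 1) κ i = 0 := fun i => esymRem_of_le (by omega) κ i
    simp [this]

lemma esymm_cons (a : ℝ) (s : Multiset ℝ) (j : ℕ) :
    (a ::ₘ s).esymm (j + 1) = s.esymm (j + 1) + a * s.esymm j := by
  rw [Multiset.esymm, Multiset.powersetCard_cons, Multiset.map_add, Multiset.sum_add,
    Multiset.map_map, Multiset.esymm]
  congr 1
  rw [Multiset.esymm, ← Multiset.sum_map_mul_left]
  congr 1
  refine Multiset.map_congr rfl fun t ht => ?_
  simp [Multiset.prod_cons]

lemma esymm_zero' (s : Multiset ℝ) : s.esymm 0 = 1 := by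
  simp [Multiset.esymm, Multiset.powersetCard_zero_left]

lemma esymm_nil (j : ℕ) : (0 : Multiset ℝ).esymm (j + 1) = 0 := by
  simp [Multiset.esymm, Multiset.powersetCard_zero_right]

lemma L1 (s : Multiset ℝ) :
    s.esymm 1 ^ 2 = (s.map (fun x => x ^ 2)).sum + 2 * s.esymm 2 := by
  induction s using Multiset.induction with
  | empty => simp [esymm_nil]
  | cons a s ih =>
    have h2 : (a ::ₘ s).esymm 2 = s.esymm 2 + a * s.esymm 1 := esymm_cons a s 1
    have h1 : (a ::ₘ s).esymm 1 = s.esymm 1 + a * s.esymm 0 := esymm_cons a s 0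
    rw [h1, h2, esymm_zero', Multiset.map_cons, Multiset.sum_cons]
    nlinarith [ih]

lemma exists_tuple (s : Multiset ℝ) :
    ∃ (d : ℕ) (f : Fin d → ℝ),
      s = Multiset.map f (Finset.univ : Finset (Fin d)).val ∧ d = Multiset.card s := by
  obtain ⟨l⟩ := s
  refine ⟨l.length, l.get, ?_, by simp⟩
  have : (Finset.univ : Finset (Fin l.length)).val = ↑(List.finRange l.length) := rfl
  rw [this]
  rw [show Multiset.map l.get ↑(List.finRange l.length) = ↑((List.finRange l.length).map l.get)
    from rfl, List.map_get_finRange]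
  rfl

lemma tuple_sum {d : ℕ} (f : Fin d → ℝ) :
    (Multiset.map f (Finset.univ : Finset (Fin d)).val).sum = ∑ i, f i := rfl

lemma tuple_map_sum {d : ℕ} (f : Fin d → ℝ) (g : ℝ → ℝ) :
    ((Multiset.map f (Finset.univ : Finset (Fin d)).val).map g).sum = ∑ i, g (f i) := by
  rw [Multiset.map_map]; rfl

lemma tuple_card {d : ℕ} (f : Fin d → ℝ) :
    Multiset.card (Multiset.map f (Finset.univ : Finset (Fin d)).val) = d := by simp

lemma multiset_cauchy (s : Multiset ℝ) :
    s.sum ^ 2 ≤ (Multiset.card s : ℝ) * (s.map (fun x => x ^ 2)).sum := by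
  obtain ⟨d, f, rfl, -⟩ := exists_tuple s
  rw [tuple_sum, tuple_map_sum, tuple_card]
  have h3 := sq_sum_le_card_mul_sum_sq (s := (Finset.univ : Finset (Fin d))) (f := f)
  simpa using h3

lemma N1 (s : Multiset ℝ) :
    2 * (Multiset.card s : ℝ) * s.esymm 2 ≤ ((Multiset.card s : ℝ) - 1) * s.esymm 1 ^ 2 := by
  have h1 := L1 s
  have h2 : s.esymm 1 ^ 2 ≤ (Multiset.card s : ℝ) * (s.map (fun x => x ^ 2)).sum := by
    have : s.esymm 1 = s.sum := by
      rw [Multiset.esymm, Multiset.powersetCard_one, Multiset.map_map]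
      simp
    rw [this]; exact multiset_cauchy s
  nlinarith [h1, h2]

lemma esym_eq_esymm {n : ℕ} (m : ℕ) (κ : Fin n → ℝ) :
    esym m κ = (Multiset.map κ Finset.univ.val).esymm m := by
  rw [esym, ← Finset.esymm_map_val]

lemma inv_esym {d : ℕ} (u : Fin d → ℝ) (hu : ∀ i, u i ≠ 0) (j : ℕ) (hj : j ≤ d) :
    esym j (fun i => (u i)⁻¹) * ∏ i, u i = esym (d - j) u := by
  classical
  rw [esym, esym, Finset.sum_mul]
  refine Finset.sum_nbij' (fun A => Aᶜ) (fun B => Bᶜ) ?_ ?_ ?_ ?_ ?_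
  · intro A hA
    rw [Finset.mem_powersetCard] at hA ⊢
    refine ⟨Finset.subset_univ _, ?_⟩
    rw [Finset.card_compl, hA.2, Fintype.card_fin]
  · intro B hB
    rw [Finset.mem_powersetCard] at hB ⊢
    refine ⟨Finset.subset_univ _, ?_⟩
    rw [Finset.card_compl, hB.2, Fintype.card_fin]
    omega
  · intro A _; simp
  · intro B _; simp
  · intro A hA
    rw [Finset.mem_powersetCard] at hA
    have hsplit : (∏ i, u i) = (∏ i ∈ A, u i) * ∏ i ∈ Aᶜ, u i := by
      rw [← Finset.prod_mul_prod_compl A u]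
    rw [hsplit, ← mul_assoc, ← Finset.prod_mul_distrib]
    have : ∏ i ∈ A, (u i)⁻¹ * u i = 1 :=
      Finset.prod_eq_one fun i _ => inv_mul_cancel₀ (hu i)
    rw [this, one_mul]

lemma esym_card {d : ℕ} (u : Fin d → ℝ) : esym d u = ∏ i, u i := by
  rw [esym]
  rw [show (Finset.univ : Finset (Fin d)).powersetCard d
      = {(Finset.univ : Finset (Fin d))} by
    simpa using Finset.powersetCard_self (Finset.univ : Finset (Fin d))]
  simp

lemma Ntop (s : Multiset ℝ) (hd : 2 ≤ Multiset.card s) :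
    2 * (Multiset.card s : ℝ) * (s.esymm (Multiset.card s) * s.esymm (Multiset.card s - 2))
      ≤ ((Multiset.card s : ℝ) - 1) * s.esymm (Multiset.card s - 1) ^ 2 := by
  obtain ⟨d, u, rfl, -⟩ := exists_tuple s
  rw [tuple_card] at hd ⊢
  rw [← esym_eq_esymm, ← esym_eq_esymm, ← esym_eq_esymm]
  by_cases hz : ∃ i, u i = 0
  · obtain ⟨i, hi⟩ := hz
    have : esym d u = 0 := by
      rw [esym_card]; exact Finset.prod_eq_zero (Finset.mem_univ i) hi
    rw [this]
    have : (0:ℝ) ≤ ((d:ℝ) - 1) * esym (d-1) u ^ 2 := by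
      apply mul_nonneg ?_ (sq_nonneg _)
      have : (2:ℝ) ≤ (d:ℝ) := by exact_mod_cast hd
      linarith
    linarith
  · push_neg at hz
    set v : Fin d → ℝ := fun i => (u i)⁻¹ with hv
    have hN := N1 (Multiset.map v (Finset.univ : Finset (Fin d)).val)
    rw [tuple_card, ← esym_eq_esymm, ← esym_eq_esymm] at hN
    have hP : (∏ i, u i) ≠ 0 := Finset.prod_ne_zero_iff.2 fun i _ => hz i
    have e2 : esym 2 v * ∏ i, u i = esym (d - 2) u := inv_esym u hz 2 hd
    have e1 : esym 1 v * ∏ i, u i = esym (d - 1) u := inv_esym u hz 1 (by omega)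
    have ed : esym d u = ∏ i, u i := esym_card u
    have hP2 : (0:ℝ) < (∏ i, u i) ^ 2 := by positivity
    have := mul_le_mul_of_nonneg_right hN (le_of_lt hP2)
    calc 2 * (d:ℝ) * (esym d u * esym (d - 2) u)
        = 2 * (d:ℝ) * esym 2 v * (∏ i, u i) ^ 2 := by
          rw [ed, ← e2]; ring
      _ ≤ ((d:ℝ) - 1) * esym 1 v ^ 2 * (∏ i, u i) ^ 2 := this
      _ = ((d:ℝ) - 1) * esym (d - 1) u ^ 2 := by rw [← e1]; ring

open Polynomial in
lemma newton_raw {n : ℕ} (m : ℕ) (hm : 1 ≤ m) (hmn : m + 1 ≤ n) (κ : Fin n → ℝ) :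
    2 * ((m:ℝ) + 1) * (((n - m - 1).descFactorial (n - m - 1) : ℝ)
        * ((2 + (n - m - 1)).descFactorial (n - m - 1) : ℝ))
        * (esym (m + 1) κ * esym (m - 1) κ)
      ≤ (m : ℝ) * (((1 + (n - m - 1)).descFactorial (n - m - 1) : ℝ))^2 * (esym m κ)^2 := by
  classical
  set r := n - m - 1 with hr
  set P : ℝ[X] := ∏ i, (X + C (κ i)) with hP
  have hmonic : P.Monic := monic_prod_of_monic _ _ fun i _ => monic_X_add_C (κ i)
  have hPdeg : P.natDegree = n := by
    rw [hP, natDegree_prod _ _ fun i _ => (monic_X_add_C (κ i)).ne_zero]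
    simp [natDegree_X_add_C]
  have hProots : Multiset.card P.roots = n := by
    rw [hP, roots_prod _ _ (by rw [← hP]; exact hmonic.ne_zero)]
    rw [Multiset.card_bind]
    have : ∀ i : Fin n, Multiset.card ((X + C (κ i)).roots) = 1 := by
      intro i
      rw [show X + C (κ i) = X - C (-(κ i)) by rw [map_neg, sub_neg_eq_add], roots_X_sub_C]
      rfl
    simp [this]
  set Q : ℝ[X] := derivative^[r] P with hQ
  have hcoeff : ∀ j : ℕ, Q.coeff j = ((j + r).descFactorial r : ℝ) * P.coeff (j + r) := by
    intro j
    rw [hQ, coeff_iterate_derivative, nsmul_eq_mul]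
  have hPcoeff : ∀ j : ℕ, j ≤ m + 1 → P.coeff (j + r) = esym (m + 1 - j) κ := by
    intro j hj
    have hle : j + r ≤ #(Finset.univ : Finset (Fin n)) := by
      rw [Finset.card_univ, Fintype.card_fin]; omega
    rw [hP, Finset.prod_X_add_C_coeff _ _ hle, esym]
    congr 2
    rw [Finset.card_univ, Fintype.card_fin]; omega
  have hQtop : Q.coeff (m + 1) = (n.descFactorial r : ℝ) := by
    rw [hcoeff (m + 1), show m + 1 + r = n by omega, ← hPdeg, hmonic.coeff_natDegree, mul_one]
  have hL0 : (n.descFactorial r : ℝ) ≠ 0 := by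
    have : n.descFactorial r ≠ 0 := by
      rw [Ne, Nat.descFactorial_eq_zero_iff_lt]; omega
    exact_mod_cast this
  have hdeg_ge : m + 1 ≤ Q.natDegree := le_natDegree_of_ne_zero (by rw [hQtop]; exact hL0)
  have hdeg : Q.natDegree = m + 1 := by
    have h1 := natDegree_iterate_derivative P r
    rw [hPdeg, ← hQ] at h1
    omega
  have hcard_aux : ∀ k : ℕ, n ≤ Multiset.card ((derivative^[k] P).roots) + k := by
    intro k
    induction k with
    | zero => simp [hProots]
    | succ k ih =>
      have h2 := card_roots_le_derivative (derivative^[k] P)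
      rw [Function.iterate_succ_apply']
      omega
  have hRcard : Multiset.card Q.roots = Q.natDegree := by
    have h1 := hcard_aux r
    have h2 : Multiset.card Q.roots ≤ Q.natDegree := Q.card_roots'
    rw [← hQ] at h1
    omega
  set R := Q.roots with hRR
  set L : ℝ := (n.descFactorial r : ℝ) with hL
  have hlead : Q.leadingCoeff = L := by
    rw [leadingCoeff, hdeg, hQtop]
  have hvieta : ∀ j : ℕ, j ≤ m + 1 →
      ((j + r).descFactorial r : ℝ) * esym (m + 1 - j) κ
        = L * (-1) ^ (m + 1 - j) * R.esymm (m + 1 - j) := by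
    intro j hj
    have := Polynomial.coeff_eq_esymm_roots_of_card hRcard (k := j) (by omega)
    rw [hcoeff j, hPcoeff j hj, hlead, hdeg] at this
    rw [this]
  have E0 := hvieta 0 (by omega)
  have E1 := hvieta 1 (by omega)
  have E2 := hvieta 2 (by omega)
  rw [show m + 1 - 1 = m by omega] at E1
  rw [show m + 1 - 2 = m - 1 by omega] at E2
  rw [show m + 1 - 0 = m + 1 by omega] at E0
  rw [show (0 : ℕ) + r = r by omega] at E0
  have ntop := Ntop R (by rw [hRcard, hdeg]; omega)
  rw [hRcard, hdeg] at ntop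
  rw [show m + 1 - 2 = m - 1 by omega, show m + 1 - 1 = m by omega] at ntop
  push_cast at ntop
  have key := mul_le_mul_of_nonneg_left ntop (sq_nonneg L)
  have hsign : (-1 : ℝ) ^ (m + 1) * (-1 : ℝ) ^ (m - 1) = 1 := by
    rw [← pow_add, show m + 1 + (m - 1) = 2 * m by omega, pow_mul, neg_one_sq, one_pow]
  have h0 : (r.descFactorial r : ℝ) * esym (m + 1) κ
        * (((2 + r).descFactorial r : ℝ) * esym (m - 1) κ)
      = L ^ 2 * (R.esymm (m + 1) * R.esymm (m - 1)) := by
    rw [E0, E2]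
    calc L * (-1) ^ (m + 1) * R.esymm (m + 1) * (L * (-1) ^ (m - 1) * R.esymm (m - 1))
        = ((-1 : ℝ) ^ (m + 1) * (-1) ^ (m - 1)) * (L ^ 2 * (R.esymm (m + 1) * R.esymm (m - 1))) := by
          ring
      _ = _ := by rw [hsign, one_mul]
  have h1 : (((1 + r).descFactorial r : ℝ) * esym m κ) ^ 2 = L ^ 2 * R.esymm m ^ 2 := by
    rw [E1]
    calc (L * (-1) ^ m * R.esymm m) ^ 2
        = ((-1 : ℝ) ^ m) ^ 2 * (L ^ 2 * R.esymm m ^ 2) := by ring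
      _ = _ := by rw [← pow_mul, mul_comm m 2, pow_mul, neg_one_sq, one_pow, one_mul]
  calc 2 * ((m:ℝ) + 1) * ((r.descFactorial r : ℝ) * ((2 + r).descFactorial r : ℝ))
        * (esym (m + 1) κ * esym (m - 1) κ)
      = (2 * ((m:ℝ) + 1)) * ((r.descFactorial r : ℝ) * esym (m + 1) κ
          * (((2 + r).descFactorial r : ℝ) * esym (m - 1) κ)) := by ring
    _ = L ^ 2 * (2 * ((m:ℝ) + 1) * (R.esymm (m + 1) * R.esymm (m - 1))) := by rw [h0]; ring
    _ ≤ L ^ 2 * (((m:ℝ) + 1 - 1) * R.esymm m ^ 2) := key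
    _ = (m : ℝ) * ((((1 + r).descFactorial r : ℝ) * esym m κ) ^ 2) := by rw [h1]; ring
    _ = (m : ℝ) * (((1 + r).descFactorial r : ℝ)) ^ 2 * (esym m κ) ^ 2 := by ring

lemma newton_p {n : ℕ} (m : ℕ) (hm : 1 ≤ m) (hmn : m + 1 ≤ n) (κ : Fin n → ℝ) :
    esym (m - 1) κ / (n.choose (m - 1) : ℝ) * (esym (m + 1) κ / (n.choose (m + 1) : ℝ))
      ≤ (esym m κ / (n.choose m : ℝ)) ^ 2 := by
  have raw := newton_raw m hm hmn κ
  set r := n - m - 1 with hr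
  set c0 : ℕ := r.descFactorial r with hc0def
  set c1 : ℕ := (1 + r).descFactorial r with hc1def
  set c2 : ℕ := (2 + r).descFactorial r with hc2def
  set Cm1 : ℝ := (n.choose (m - 1) : ℝ) with hCm1
  set Cp1 : ℝ := (n.choose (m + 1) : ℝ) with hCp1
  set Cm : ℝ := (n.choose m : ℝ) with hCm
  set σm1 := esym (m - 1) κ
  set σp := esym (m + 1) κ
  set σm := esym m κ
  -- factorial values of the descFactorials
  have hc0 : (c0 : ℝ) = (r.factorial : ℝ) := by
    have := Nat.factorial_mul_descFactorial (le_refl r)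
    rw [Nat.sub_self, Nat.factorial_zero, one_mul] at this
    exact_mod_cast congrArg (Nat.cast (R := ℝ)) this
  have hc1 : (c1 : ℝ) = ((r + 1).factorial : ℝ) := by
    have := Nat.factorial_mul_descFactorial (show r ≤ 1 + r by omega)
    rw [show 1 + r - r = 1 by omega, Nat.factorial_one, one_mul] at this
    rw [hc1def, show r + 1 = 1 + r by omega]
    exact_mod_cast congrArg (Nat.cast (R := ℝ)) this
  have hc2 : 2 * (c2 : ℝ) = ((r + 2).factorial : ℝ) := by
    have := Nat.factorial_mul_descFactorial (show r ≤ 2 + r by omega)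
    rw [show 2 + r - r = 2 by omega] at this
    rw [hc2def, show r + 2 = 2 + r by omega]
    have h2 : (2 : ℕ).factorial = 2 := rfl
    rw [h2] at this
    exact_mod_cast congrArg (Nat.cast (R := ℝ)) this
  -- choose in terms of factorials
  have A1 : Cm1 * ((m - 1).factorial : ℝ) * ((r + 2).factorial : ℝ) = (n.factorial : ℝ) := by
    have h := Nat.choose_mul_factorial_mul_factorial (show m - 1 ≤ n by omega)
    rw [show n - (m - 1) = r + 2 by omega] at h
    rw [hCm1]
    exact_mod_cast congrArg (Nat.cast (R := ℝ)) h
  have A2 : Cp1 * ((m + 1).factorial : ℝ) * ((r : ℕ).factorial : ℝ) = (n.factorial : ℝ) := by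
    have h := Nat.choose_mul_factorial_mul_factorial (show m + 1 ≤ n by omega)
    rw [show n - (m + 1) = r by omega] at h
    rw [hCp1]
    exact_mod_cast congrArg (Nat.cast (R := ℝ)) h
  have A3 : Cm * ((m).factorial : ℝ) * ((r + 1).factorial : ℝ) = (n.factorial : ℝ) := by
    have h := Nat.choose_mul_factorial_mul_factorial (show m ≤ n by omega)
    rw [show n - m = r + 1 by omega] at h
    rw [hCm]
    exact_mod_cast congrArg (Nat.cast (R := ℝ)) h
  have F1 : ((m + 1).factorial : ℝ) = ((m : ℝ) + 1) * (m : ℝ) * ((m - 1).factorial : ℝ) := by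
    rw [show m + 1 = (m - 1) + 1 + 1 by omega, Nat.factorial_succ, Nat.factorial_succ]
    push_cast
    rw [show ((m : ℕ) - 1 : ℕ) = m - 1 from rfl]
    have : ((m - 1 : ℕ) : ℝ) = (m : ℝ) - 1 := by
      have : (1 : ℕ) ≤ m := hm
      push_cast [this]; ring
    rw [this]; ring
  have F2 : ((m).factorial : ℝ) = (m : ℝ) * ((m - 1).factorial : ℝ) := by
    rw [show m = (m - 1) + 1 by omega, Nat.factorial_succ]
    push_cast
    have : ((m - 1 : ℕ) : ℝ) = (m : ℝ) - 1 := by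
      have : (1 : ℕ) ≤ m := hm
      push_cast [this]; ring
    rw [this]
  have hfacpos : ∀ j : ℕ, (0:ℝ) < (j.factorial : ℝ) := fun j => by
    exact_mod_cast j.factorial_pos
  have id : 2 * ((m:ℝ) + 1) * ((c0 : ℝ) * (c2 : ℝ)) * (Cm1 * Cp1)
      = (m : ℝ) * (c1 : ℝ) ^ 2 * Cm ^ 2 := by
    have e1 : Cm1 = (n.factorial : ℝ) / (((m - 1).factorial : ℝ) * ((r + 2).factorial : ℝ)) := by
      rw [eq_div_iff (by positivity)]; rw [← A1]; ring
    have e2 : Cp1 = (n.factorial : ℝ) / (((m + 1).factorial : ℝ) * ((r : ℕ).factorial : ℝ)) := by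
      rw [eq_div_iff (by positivity)]; rw [← A2]; ring
    have e3 : Cm = (n.factorial : ℝ) / (((m).factorial : ℝ) * ((r + 1).factorial : ℝ)) := by
      rw [eq_div_iff (by positivity)]; rw [← A3]; ring
    have e4 : (c2 : ℝ) = ((r + 2).factorial : ℝ) / 2 := by linarith [hc2]
    rw [e1, e2, e3, e4, hc0, hc1, F1, F2]
    have h1 := hfacpos (m - 1)
    have h2 := hfacpos r
    have h3 := hfacpos (r + 1)
    have h4 := hfacpos (r + 2)
    have h5 := hfacpos n
    have hmr : (0:ℝ) < (m : ℝ) := by exact_mod_cast hm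
    field_simp
  -- positivity
  have hc0pos : (0:ℝ) < (c0 : ℝ) := by rw [hc0]; exact hfacpos r
  have hc2pos : (0:ℝ) < (c2 : ℝ) := by
    have := hfacpos (r + 2); linarith [hc2]
  have ha : (0:ℝ) < 2 * ((m:ℝ) + 1) * ((c0 : ℝ) * (c2 : ℝ)) := by positivity
  have hCm1pos : (0:ℝ) < Cm1 := by
    rw [hCm1]; exact_mod_cast Nat.choose_pos (show m - 1 ≤ n by omega)
  have hCp1pos : (0:ℝ) < Cp1 := by
    rw [hCp1]; exact_mod_cast Nat.choose_pos (show m + 1 ≤ n by omega)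
  have hCmpos : (0:ℝ) < Cm := by
    rw [hCm]; exact_mod_cast Nat.choose_pos (show m ≤ n by omega)
  rw [div_mul_div_comm, div_pow, div_le_div_iff₀ (by positivity) (by positivity)]
  -- goal : σm1 * σp * Cm ^ 2 ≤ σm ^ 2 * (Cm1 * Cp1)
  have key : (2 * ((m:ℝ) + 1) * ((c0 : ℝ) * (c2 : ℝ))) * (σm1 * σp * Cm ^ 2)
      ≤ (2 * ((m:ℝ) + 1) * ((c0 : ℝ) * (c2 : ℝ))) * (σm ^ 2 * (Cm1 * Cp1)) := by
    have step := mul_le_mul_of_nonneg_right raw (sq_nonneg Cm)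
    calc (2 * ((m:ℝ) + 1) * ((c0 : ℝ) * (c2 : ℝ))) * (σm1 * σp * Cm ^ 2)
        = 2 * ((m:ℝ) + 1) * ((c0 : ℝ) * (c2 : ℝ)) * (σp * σm1) * Cm ^ 2 := by ring
      _ ≤ (m : ℝ) * (c1 : ℝ) ^ 2 * σm ^ 2 * Cm ^ 2 := step
      _ = (2 * ((m:ℝ) + 1) * ((c0 : ℝ) * (c2 : ℝ))) * (σm ^ 2 * (Cm1 * Cp1)) := by
          linear_combination (-(σm ^ 2)) * id
  exact le_of_mul_le_mul_left key ha

lemma esym_of_lt2 {n m : ℕ} (h : n < m) (κ : Fin n → ℝ) : esym m κ = 0 := by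
  rw [esym, Finset.powersetCard_eq_empty.2 (by simpa using h), Finset.sum_empty]

noncomputable def pfun {n : ℕ} (κ : Fin n → ℝ) (j : ℕ) : ℝ := esym j κ / (n.choose j : ℝ)

lemma newton_pf {n : ℕ} (m : ℕ) (hm : 1 ≤ m) (hmn : m + 1 ≤ n) (κ : Fin n → ℝ) :
    pfun κ (m - 1) * pfun κ (m + 1) ≤ pfun κ m ^ 2 := newton_p m hm hmn κ

lemma esym_zero2 {n : ℕ} (κ : Fin n → ℝ) : esym 0 κ = 1 := by simp [esym]

lemma pfun_zero {n : ℕ} (κ : Fin n → ℝ) : pfun κ 0 = 1 := by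
  simp [pfun, esym_zero2]

section chain

variable {n k : ℕ} (hk : 1 ≤ k) (hkn : k ≤ n) (κ : Fin n → ℝ)
  (hΓ : ∀ j, 1 ≤ j → j ≤ k → 0 < esym j κ)

include hkn hΓ in
lemma hppos : ∀ j, j ≤ k → 0 < pfun κ j := by
  intro j hj
  rcases Nat.eq_zero_or_pos j with rfl | hj1
  · rw [pfun_zero]; norm_num
  · have h1 : (0:ℝ) < (n.choose j : ℝ) := by
      exact_mod_cast Nat.choose_pos (by omega)
    exact div_pos (hΓ j hj1 hj) h1

include hkn hΓ in
lemma hchainA : ∀ j, j + 1 ≤ k → pfun κ (j + 1) ≤ pfun κ 1 * pfun κ j := by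
  intro j
  induction j with
  | zero => intro h; rw [pfun_zero, mul_one]
  | succ j ih =>
    intro h
    have hN := newton_pf (j + 1) (by omega) (by omega) κ
    rw [show j + 1 - 1 = j from rfl] at hN
    have hihyp := ih (by omega)
    have h0 := hppos hkn κ hΓ j (by omega)
    have h1 := hppos hkn κ hΓ (j + 1) (by omega)
    have hp1 := hppos hkn κ hΓ 1 (by omega)
    nlinarith [hN, hihyp, h0, h1, hp1]

include hk hkn hΓ in
lemma hM1 : pfun κ k ≤ pfun κ 1 ^ k := by
  have : ∀ j, j ≤ k → pfun κ j ≤ pfun κ 1 ^ j := by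
    intro j
    induction j with
    | zero => intro _; rw [pfun_zero, pow_zero]
    | succ j ih =>
      intro h
      have h1 := hchainA hkn κ hΓ j h
      have hp1 := hppos hkn κ hΓ 1 (by omega)
      have h2 := ih (by omega)
      calc pfun κ (j + 1) ≤ pfun κ 1 * pfun κ j := h1
        _ ≤ pfun κ 1 * pfun κ 1 ^ j := by nlinarith [hppos hkn κ hΓ j (by omega : j ≤ k)]
        _ = pfun κ 1 ^ (j + 1) := by ring
  exact this k le_rfl

include hk hkn hΓ in
lemma hchainB (hkn1 : k + 1 ≤ n) :
    ∀ i, i ≤ k - 1 → pfun κ (k + 1) * pfun κ (k - 1 - i) ≤ pfun κ k * pfun κ (k - i) := by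
  intro i
  induction i with
  | zero =>
    intro _
    have hN := newton_pf k hk hkn1 κ
    rw [show k - 1 - 0 = k - 1 from rfl, show k - 0 = k from rfl]
    nlinarith [hN]
  | succ i ih =>
    intro h
    have hBi := ih (by omega)
    have hN := newton_pf (k - 1 - i) (by omega) (by omega) κ
    rw [show k - 1 - i - 1 = k - 1 - (i + 1) by omega, show k - 1 - i + 1 = k - i by omega] at hN
    rcases le_or_gt (pfun κ (k + 1)) 0 with hneg | hpos
    · have h1 := hppos hkn κ hΓ (k - 1 - (i + 1)) (by omega)
      have h2 := hppos hkn κ hΓ k (by omega)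
      have h3 := hppos hkn κ hΓ (k - (i + 1)) (by omega)
      nlinarith
    · have h1 := hppos hkn κ hΓ (k - 1 - i) (by omega)
      have h2 := hppos hkn κ hΓ (k - i) (by omega)
      have h3 := hppos hkn κ hΓ k (by omega)
      have h4 := hppos hkn κ hΓ (k - 1 - (i + 1)) (by omega)
      rw [show k - (i + 1) = k - 1 - i by omega]
      nlinarith [mul_le_mul_of_nonneg_left hN (le_of_lt hpos)]

include hk hkn hΓ in
lemma hM2 (hkn1 : k + 1 ≤ n) (hpos : 0 < pfun κ (k + 1)) :
    pfun κ (k + 1) ^ k ≤ pfun κ k ^ (k + 1) := by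
  have hC : ∀ i, i ≤ k - 1 → pfun κ (k + 1) ^ (i + 1) * pfun κ (k - 1 - i)
      ≤ pfun κ k ^ (i + 2) := by
    intro i
    induction i with
    | zero =>
      intro _
      have := hchainB hk hkn κ hΓ hkn1 0 (by omega)
      rw [show k - 0 = k from rfl] at this
      calc pfun κ (k + 1) ^ 1 * pfun κ (k - 1 - 0) = pfun κ (k + 1) * pfun κ (k - 1 - 0) := by
            rw [pow_one]
        _ ≤ pfun κ k * pfun κ k := this
        _ = pfun κ k ^ 2 := (sq (pfun κ k)).symm
    | succ i ih =>
      intro h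
      have hB := hchainB hk hkn κ hΓ hkn1 (i + 1) h
      have hCi := ih (by omega)
      have hk0 := hppos hkn κ hΓ k (by omega)
      have hpows : (0:ℝ) < pfun κ (k + 1) ^ (i + 1) := pow_pos hpos _
      calc pfun κ (k + 1) ^ (i + 1 + 1) * pfun κ (k - 1 - (i + 1))
          = pfun κ (k + 1) ^ (i + 1) * (pfun κ (k + 1) * pfun κ (k - 1 - (i + 1))) := by ring
        _ ≤ pfun κ (k + 1) ^ (i + 1) * (pfun κ k * pfun κ (k - (i + 1))) := by
            apply mul_le_mul_of_nonneg_left hB (le_of_lt hpows)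
        _ = pfun κ k * (pfun κ (k + 1) ^ (i + 1) * pfun κ (k - 1 - i)) := by
            rw [show k - (i + 1) = k - 1 - i by omega]; ring
        _ ≤ pfun κ k * pfun κ k ^ (i + 2) := by
            apply mul_le_mul_of_nonneg_left hCi (le_of_lt hk0)
        _ = pfun κ k ^ (i + 3) := by ring
  have := hC (k - 1) (le_refl _)
  rw [show k - 1 - (k - 1) = 0 by omega, pfun_zero, mul_one, show k - 1 + 1 = k by omega,
    show k - 1 + 2 = k + 1 by omega] at this
  exact this

end chain

section mac

variable {n k : ℕ} (hk : 1 ≤ k) (hkn : k ≤ n) (κ : Fin n → ℝ)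
  (hΓ : ∀ j, 1 ≤ j → j ≤ k → 0 < esym j κ)

include hk hkn hΓ in
lemma mac1 : (n:ℝ) * pfun κ k ^ ((1:ℝ)/(k:ℝ)) ≤ esym 1 κ := by
  have hpk := hppos hkn κ hΓ k le_rfl
  have hp1 := hppos hkn κ hΓ 1 hk
  have hkR : ((k:ℝ)) ≠ 0 := by positivity
  have step : pfun κ k ^ ((1:ℝ)/(k:ℝ)) ≤ pfun κ 1 := by
    have h := Real.rpow_le_rpow (le_of_lt hpk) (hM1 hk hkn κ hΓ)
      (by positivity : (0:ℝ) ≤ 1/(k:ℝ))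
    rwa [← Real.rpow_natCast (pfun κ 1) k, ← Real.rpow_mul (le_of_lt hp1),
      mul_one_div, div_self hkR, Real.rpow_one] at h
  have hn1 : esym 1 κ = (n:ℝ) * pfun κ 1 := by
    have hnR : ((n:ℝ)) ≠ 0 := by
      have : (0:ℕ) < n := lt_of_lt_of_le hk hkn
      positivity
    rw [pfun, Nat.choose_one_right]
    field_simp
  rw [hn1]
  have hn0 : (0:ℝ) ≤ (n:ℝ) := by positivity
  exact mul_le_mul_of_nonneg_left step hn0

include hk hkn hΓ in
lemma mac2 : esym (k + 1) κ ≤ (n.choose (k+1) : ℝ) * pfun κ k ^ (((k:ℝ)+1)/(k:ℝ)) := by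
  have hpk := hppos hkn κ hΓ k le_rfl
  have hkR : ((k:ℝ)) ≠ 0 := by positivity
  rcases eq_or_lt_of_le hkn with rfl | hlt
  · rw [esym_of_lt2 (show k < k + 1 by omega) κ, Nat.choose_eq_zero_of_lt (by omega)]
    norm_num
  · have hkn1 : k + 1 ≤ n := hlt
    have hC : (0:ℝ) < (n.choose (k+1) : ℝ) := by exact_mod_cast Nat.choose_pos hkn1
    have hkp1 : esym (k + 1) κ = (n.choose (k+1) : ℝ) * pfun κ (k + 1) := by
      rw [pfun]; field_simp
    rcases le_or_gt (pfun κ (k + 1)) 0 with hneg | hpos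
    · have h1 : esym (k + 1) κ ≤ 0 := by
        rw [hkp1]; exact mul_nonpos_of_nonneg_of_nonpos (le_of_lt hC) hneg
      have h2 : (0:ℝ) ≤ (n.choose (k+1) : ℝ) * pfun κ k ^ (((k:ℝ)+1)/(k:ℝ)) := by
        have := Real.rpow_pos_of_pos hpk (((k:ℝ)+1)/(k:ℝ))
        positivity
      linarith
    · have hM := hM2 hk hkn κ hΓ hkn1 hpos
      have h := Real.rpow_le_rpow (by positivity) hM (by positivity : (0:ℝ) ≤ 1/(k:ℝ))
      rw [← Real.rpow_natCast (pfun κ (k+1)) k, ← Real.rpow_natCast (pfun κ k) (k+1),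
        ← Real.rpow_mul (le_of_lt hpos), ← Real.rpow_mul (le_of_lt hpk),
        mul_one_div, div_self hkR, Real.rpow_one] at h
      have hexp : ((k+1 : ℕ) : ℝ) * (1/(k:ℝ)) = ((k:ℝ)+1)/(k:ℝ) := by
        push_cast; field_simp
      rw [hexp] at h
      rw [hkp1]
      exact mul_le_mul_of_nonneg_left h (le_of_lt hC)

include hk hkn hΓ in
lemma KEY : (k:ℝ) * ((n.choose k : ℝ)) ^ (-(1:ℝ)/(k:ℝ)) * esym k κ ^ ((1:ℝ)/(k:ℝ) + 1)
    ≤ esym 1 κ * esym k κ - ((k:ℝ)+1) * esym (k + 1) κ := by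
  have hσk := hΓ k hk le_rfl
  have hCk : (0:ℝ) < (n.choose k : ℝ) := by exact_mod_cast Nat.choose_pos hkn
  have hpk := hppos hkn κ hΓ k le_rfl
  have hkR : ((k:ℝ)) ≠ 0 := by positivity
  set t := pfun κ k ^ ((1:ℝ)/(k:ℝ)) with ht
  have htpos : 0 < t := Real.rpow_pos_of_pos hpk _
  -- choose identity
  have hid : ((k:ℝ)+1) * (n.choose (k+1) : ℝ) = ((n:ℝ) - k) * (n.choose k : ℝ) := by
    have h := Nat.choose_succ_right_eq n k
    have h2 : ((n.choose (k+1) * (k+1) : ℕ) : ℝ) = ((n.choose k * (n - k) : ℕ) : ℝ) := by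
      exact_mod_cast congrArg (Nat.cast (R := ℝ)) h
    push_cast [hkn] at h2
    linarith
  -- step 1
  have s1 : (n:ℝ) * t * esym k κ ≤ esym 1 κ * esym k κ :=
    mul_le_mul_of_nonneg_right (mac1 hk hkn κ hΓ) (le_of_lt hσk)
  -- step 2
  have hsplit : pfun κ k ^ (((k:ℝ)+1)/(k:ℝ)) = pfun κ k * t := by
    have : ((k:ℝ)+1)/(k:ℝ) = 1 + 1/(k:ℝ) := by field_simp
    rw [this, Real.rpow_add hpk, Real.rpow_one, ht]
  have s2 : ((k:ℝ)+1) * esym (k + 1) κ ≤ ((n:ℝ) - k) * esym k κ * t := by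
    have h := mac2 hk hkn κ hΓ
    have h2 := mul_le_mul_of_nonneg_left h (by positivity : (0:ℝ) ≤ (k:ℝ)+1)
    calc ((k:ℝ)+1) * esym (k + 1) κ
        ≤ ((k:ℝ)+1) * ((n.choose (k+1) : ℝ) * pfun κ k ^ (((k:ℝ)+1)/(k:ℝ))) := h2
      _ = (((k:ℝ)+1) * (n.choose (k+1) : ℝ)) * (pfun κ k * t) := by rw [hsplit]; ring
      _ = (((n:ℝ) - k) * (n.choose k : ℝ)) * (pfun κ k * t) := by rw [hid]
      _ = ((n:ℝ) - k) * esym k κ * t := by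
          rw [pfun]
          field_simp
  -- LHS equality
  have lhs_eq : (k:ℝ) * ((n.choose k : ℝ)) ^ (-(1:ℝ)/(k:ℝ)) * esym k κ ^ ((1:ℝ)/(k:ℝ) + 1)
      = (k:ℝ) * esym k κ * t := by
    rw [ht, pfun, Real.div_rpow (le_of_lt hσk) (le_of_lt hCk),
      Real.rpow_add hσk, Real.rpow_one, neg_div, Real.rpow_neg (le_of_lt hCk)]
    field_simp
  rw [lhs_eq]
  have hnk : (k:ℝ) ≤ (n:ℝ) := by exact_mod_cast hkn
  nlinarith [s1, s2, htpos, hσk]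

end mac

/-- For f = σ_k^{1/β} and κ ∈ Γ_k^+ (with ∂f/∂κ_i = (1/β)σ_k^{1/β−1}σ_{k−1}(κ|i)):
    Σ_i (∂f/∂κ_i) κ_i² = (1/β) H σ_k^{1/β} − ((k+1)/β) σ_k^{(1−β)/β} σ_{k+1}
      ≥ C(n,k)^{−1/k} (k/β) f^{1+β/k}. -/
theorem stmt_8 {n : ℕ} (k : ℕ) (hk : 1 ≤ k) (hkn : k ≤ n) (β : ℝ) (hβ : 0 < β)
    (κ : Fin n → ℝ) (hΓ : ∀ j, 1 ≤ j → j ≤ k → 0 < esym j κ) :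
    (∑ i, (1 / β) * esym k κ ^ (1 / β - 1) * esymRem (k - 1) κ i * κ i ^ 2)
      = (1 / β) * esym 1 κ * esym k κ ^ (1 / β)
        - (((k : ℝ) + 1) / β) * esym k κ ^ ((1 - β) / β) * esym (k + 1) κ ∧
    ((n.choose k : ℝ)) ^ (-(1 : ℝ) / k) * ((k : ℝ) / β)
        * (esym k κ ^ ((1 : ℝ) / β)) ^ (1 + β / k)
      ≤ ∑ i, (1 / β) * esym k κ ^ (1 / β - 1) * esymRem (k - 1) κ i * κ i ^ 2 := by
  obtain ⟨k', rfl⟩ : ∃ k', k = k' + 1 := ⟨k - 1, by omega⟩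
  have hσk : 0 < esym (k' + 1) κ := hΓ _ (by omega) le_rfl
  have hβ' : β ≠ 0 := ne_of_gt hβ
  set σ := esym (k' + 1) κ with hσ
  set A := σ ^ (1 / β - 1) with hA
  have hApos : 0 < A := Real.rpow_pos_of_pos hσk _
  have hAσ : A * σ = σ ^ (1 / β) := by
    have h := Real.rpow_add hσk (1 / β - 1) 1
    rw [Real.rpow_one, show 1 / β - 1 + 1 = 1 / β by ring] at h
    rw [hA]
    exact h.symm
  have hA' : σ ^ ((1 - β) / β) = A := by
    rw [hA, show (1 - β) / β = 1 / β - 1 by field_simp]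
  have heq : (∑ i, (1 / β) * A * esymRem (k' + 1 - 1) κ i * κ i ^ 2)
      = (1 / β) * esym 1 κ * σ ^ (1 / β)
        - (((k' + 1 : ℕ) : ℝ) + 1) / β * σ ^ ((1 - β) / β) * esym (k' + 1 + 1) κ := by
    have hterm : ∀ i : Fin n,
        (1 / β) * A * esymRem (k' + 1 - 1) κ i * κ i ^ 2
          = (1 / β) * A * (κ i * σ) - (1 / β) * A * (κ i * esymRem (k' + 1) κ i) := by
      intro i
      have h := I1 k' κ i
      rw [← hσ] at h
      rw [show k' + 1 - 1 = k' from rfl]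
      linear_combination (-(1 / β) * A * κ i) * h
    rw [Finset.sum_congr rfl fun i _ => hterm i, Finset.sum_sub_distrib,
      ← Finset.mul_sum, ← Finset.mul_sum, I2 (k' + 1) κ, ← Finset.sum_mul, esym_one κ]
    rw [hA', ← hAσ]
    push_cast
    ring
  refine ⟨heq, ?_⟩
  rw [heq]
  have key := KEY (show 1 ≤ k' + 1 by omega) hkn κ hΓ
  rw [← hσ] at key
  set Ck := ((n.choose (k' + 1) : ℕ) : ℝ) with hCk
  have hfac : (0:ℝ) < (1 / β) * A := by positivity
  have step := mul_le_mul_of_nonneg_left key (le_of_lt hfac)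
  have eqL : Ck ^ (-(1:ℝ) / ((k' + 1 : ℕ) : ℝ)) * (((k' + 1 : ℕ) : ℝ) / β)
        * (σ ^ ((1:ℝ) / β)) ^ (1 + β / ((k' + 1 : ℕ) : ℝ))
      = (1 / β) * A * (((k' + 1 : ℕ) : ℝ) * Ck ^ (-(1:ℝ) / ((k' + 1 : ℕ) : ℝ))
          * σ ^ ((1:ℝ) / ((k' + 1 : ℕ) : ℝ) + 1)) := by
    have hkR : ((k' + 1 : ℕ) : ℝ) ≠ 0 := by positivity
    have h1 : (σ ^ ((1:ℝ) / β)) ^ (1 + β / ((k' + 1 : ℕ) : ℝ))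
        = σ ^ ((1:ℝ) / β + 1 / ((k' + 1 : ℕ) : ℝ)) := by
      rw [← Real.rpow_mul (le_of_lt hσk)]
      congr 1
      field_simp
      try ring
    have h2 : A * σ ^ ((1:ℝ) / ((k' + 1 : ℕ) : ℝ) + 1)
        = σ ^ ((1:ℝ) / β + 1 / ((k' + 1 : ℕ) : ℝ)) := by
      rw [hA, ← Real.rpow_add hσk]
      congr 1
      ring
    rw [h1, ← h2]
    ring
  rw [eqL]
  calc (1 / β) * A * (((k' + 1 : ℕ) : ℝ) * Ck ^ (-(1:ℝ) / ((k' + 1 : ℕ) : ℝ))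
          * σ ^ ((1:ℝ) / ((k' + 1 : ℕ) : ℝ) + 1))
      ≤ (1 / β) * A * (esym 1 κ * σ - (((k' + 1 : ℕ) : ℝ) + 1) * esym (k' + 1 + 1) κ) := step
    _ = 1 / β * esym 1 κ * σ ^ (1 / β)
        - (((k' + 1 : ℕ) : ℝ) + 1) / β * σ ^ ((1 - β) / β) * esym (k' + 1 + 1) κ := by
        rw [hA', ← hAσ]
        try ring
end
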